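/- arXiv:2604.14600 — 3 statements merged into one kernel-verified Lean document; each statement's English description precedes it below -/
import Mathlib

section
/- For t ∈ [0, π], e^{2t - 4e^t} - e^{-2t - 4e^{-t}} ≤ e^{-4}(e^{-2t} - e^{-(2-4a)t}) where a = (1 - e^{-π})/π, using e^t ≥ 1 + t and e^{-t} ≤ 1 - a·t on [0,π]. -/
open Real Set

/-- For `t ∈ [0,π]`, with `a = (1-e^{-π})/π`,
`e^{2t-4e^t} - e^{-2t-4e^{-t}} ≤ e^{-4}·(e^{-2t} - e^{-(2-4a)t})`. -/
theorem pointwise_integrand_bound :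
    ∀ t ∈ Set.Icc (0 : ℝ) Real.pi,
      Real.exp (2 * t - 4 * Real.exp t) - Real.exp (-2 * t - 4 * Real.exp (-t)) ≤
        Real.exp (-4) *
          (Real.exp (-2 * t) -
            Real.exp (-(2 - 4 * ((1 - Real.exp (-Real.pi)) / Real.pi)) * t)) := by
  intro t ht
  obtain ⟨ht0, htp⟩ := ht
  have hπ := Real.pi_pos
  set a : ℝ := (1 - Real.exp (-Real.pi)) / Real.pi with ha
  have h1 : Real.exp (2 * t - 4 * Real.exp t) ≤ Real.exp (-4) * Real.exp (-2 * t) := by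
    rw [← Real.exp_add]
    apply Real.exp_le_exp.2
    have := Real.add_one_le_exp t
    nlinarith
  have hconv : Real.exp (-t) ≤ 1 - a * t := by
    have hc := convexOn_exp.2 (Set.mem_univ (-Real.pi)) (Set.mem_univ (0 : ℝ))
      (show (0:ℝ) ≤ t / Real.pi by positivity)
      (show (0:ℝ) ≤ 1 - t / Real.pi by rw [sub_nonneg]; exact (div_le_one hπ).2 htp)
      (by ring)
    simp only [smul_eq_mul, mul_zero, add_zero, Real.exp_zero, mul_one] at hc
    have heq : t / Real.pi * -Real.pi = -t := by field_simp
    rw [heq] at hc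
    have : a * t = t / Real.pi * (1 - Real.exp (-Real.pi)) := by
      rw [ha]; ring
    linarith [hc, this.ge]
  have h2 : Real.exp (-4) * Real.exp (-(2 - 4 * a) * t) ≤
      Real.exp (-2 * t - 4 * Real.exp (-t)) := by
    rw [← Real.exp_add]
    apply Real.exp_le_exp.2
    nlinarith [hconv]
  linarith
end

section
/- I₂ - I₁ < 0, where I₁ = ∫₀^∞ e^{-θ(4+sin ln θ)} dθ and I₂ = ∫₀^∞ e^{-θ(4-sin ln θ)} dθ; equivalently, ∫₀^∞ e^{-4θ} sinh(θ sin ln θ) dθ < 0. -/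
open MeasureTheory Real Set Filter Topology

lemma sinh_le_mul_cosh {x : ℝ} (hx : 0 ≤ x) : Real.sinh x ≤ x * Real.cosh x := by
  have key : MonotoneOn (fun t => t * Real.cosh t - Real.sinh t) (Set.Ici 0) := by
    apply monotoneOn_of_deriv_nonneg (convex_Ici 0)
    · exact ((continuous_id.mul Real.continuous_cosh).sub Real.continuous_sinh).continuousOn
    · intro t _
      exact (((hasDerivAt_id t).mul (Real.hasDerivAt_cosh t)).sub
        (Real.hasDerivAt_sinh t)).differentiableAt.differentiableWithinAt
    · intro t ht
      rw [interior_Ici, mem_Ioi] at ht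
      have hd : HasDerivAt (fun t => t * Real.cosh t - Real.sinh t) (t * Real.sinh t) t := by
        have h2 := ((hasDerivAt_id t).mul (Real.hasDerivAt_cosh t)).sub (Real.hasDerivAt_sinh t)
        simp only [id] at h2
        refine h2.congr_deriv ?_
        ring
      rw [hd.deriv]
      exact mul_nonneg ht.le (Real.sinh_nonneg_iff.2 ht.le)
  have h := key self_mem_Ici (mem_Ici.2 hx) hx
  simp only [Real.sinh_zero, Real.cosh_zero, mul_one, zero_mul, sub_zero] at h
  linarith

lemma sin_le_neg_half {x : ℝ} (h1 : -(5*π/6) ≤ x) (h2 : x ≤ -(π/6)) :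
    Real.sin x ≤ -(1/2) := by
  have hy : (1:ℝ)/2 ≤ Real.sin (-x) := by
    have hz : |π/2 - (-x)| ≤ π/3 := by
      rw [abs_le]; constructor <;> nlinarith [Real.pi_pos]
    calc (1:ℝ)/2 = Real.cos (π/3) := (Real.cos_pi_div_three).symm
    _ ≤ Real.cos |π/2 - (-x)| := Real.cos_le_cos_of_nonneg_of_le_pi (abs_nonneg _)
        (by nlinarith [Real.pi_pos]) hz
    _ = Real.cos (π/2 - (-x)) := Real.cos_abs _
    _ = Real.sin (-x) := Real.cos_pi_div_two_sub _
  rw [Real.sin_neg] at hy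
  linarith

set_option maxHeartbeats 4000000 in
/-- `I₂ - I₁ < 0`, equivalently `∫₀^∞ e^{-4θ} sinh(θ sin ln θ) dθ < 0`. -/
theorem I2_lt_I1 :
    (∫ θ in Set.Ioi (0 : ℝ), Real.exp (-θ * (4 - Real.sin (Real.log θ)))) -
        (∫ θ in Set.Ioi (0 : ℝ), Real.exp (-θ * (4 + Real.sin (Real.log θ)))) < 0 ∧
    (∫ θ in Set.Ioi (0 : ℝ),
        Real.exp (-4 * θ) * Real.sinh (θ * Real.sin (Real.log θ))) < 0 := by
  set f : ℝ → ℝ := fun θ => Real.exp (-4 * θ) * Real.sinh (θ * Real.sin (Real.log θ)) with hf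
  -- continuity of f on Ioi 0
  have hlogc : ContinuousOn (fun θ : ℝ => Real.log θ) (Ioi 0) :=
    Real.continuousOn_log.mono (fun x hx => by simpa using (ne_of_gt hx))
  have hcont : ContinuousOn f (Ioi 0) := by
    apply ContinuousOn.mul
    · exact (Real.continuous_exp.comp (continuous_const.mul continuous_id)).continuousOn
    · exact Real.continuous_sinh.comp_continuousOn
        (continuousOn_id.mul (Real.continuous_sin.comp_continuousOn hlogc))
  -- pointwise absolute bound
  have habs : ∀ θ ∈ Ioi (0:ℝ), |f θ| ≤ Real.exp (-3 * θ) / 2 := by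
    intro θ hθ
    rw [mem_Ioi] at hθ
    have hs1 : |Real.sin (Real.log θ)| ≤ 1 := Real.abs_sin_le_one _
    have h1 : |θ * Real.sin (Real.log θ)| ≤ θ := by
      rw [abs_mul, abs_of_pos hθ]
      nlinarith
    have h2 : |Real.sinh (θ * Real.sin (Real.log θ))| ≤ Real.sinh θ := by
      rw [Real.abs_sinh]
      exact Real.sinh_le_sinh.2 h1
    have h3 : Real.sinh θ ≤ Real.exp θ / 2 := by
      rw [Real.sinh_eq]
      have := Real.exp_pos (-θ)
      linarith
    have h4 : Real.exp (-4*θ) * Real.exp θ = Real.exp (-3*θ) := by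
      rw [← Real.exp_add]; ring_nf
    calc |f θ| = Real.exp (-4*θ) * |Real.sinh (θ * Real.sin (Real.log θ))| := by
          rw [hf]; rw [abs_mul, abs_of_pos (Real.exp_pos _)]
    _ ≤ Real.exp (-4*θ) * (Real.exp θ / 2) := by
          apply mul_le_mul_of_nonneg_left (le_trans h2 h3) (Real.exp_pos _).le
    _ = Real.exp (-3*θ) / 2 := by rw [← h4]; ring
  -- integrability of f on Ioi 0
  have hexp3 : IntegrableOn (fun θ : ℝ => Real.exp (-3 * θ)) (Ioi (0:ℝ)) :=
    exp_neg_integrableOn_Ioi 0 (by norm_num)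
  have hintf : IntegrableOn f (Ioi (0:ℝ)) := by
    apply Integrable.mono' (hexp3.div_const 2)
      (hcont.aestronglyMeasurable measurableSet_Ioi)
    exact (ae_restrict_iff' measurableSet_Ioi).2 (ae_of_all _ habs)
  -- numeric exponential bounds
  have epos := Real.exp_pos
  have e1l : (2.7182818283:ℝ) < Real.exp 1 := Real.exp_one_gt_d9
  have e1u : Real.exp 1 < 2.7182818286 := Real.exp_one_lt_d9
  have hhsq : Real.exp (1/2) * Real.exp (1/2) = Real.exp 1 := by
    rw [← Real.exp_add]; norm_num
  have ehl : (1.6487212:ℝ) < Real.exp (1/2) := by nlinarith [epos (1/2:ℝ)]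
  have ehu : Real.exp (1/2) < 1.6487213 := by nlinarith [epos (1/2:ℝ)]
  have e2 : Real.exp 2 = Real.exp 1 * Real.exp 1 := by rw [← Real.exp_add]; norm_num
  have e2l : (7.3890560:ℝ) < Real.exp 2 := by rw [e2]; nlinarith
  have e2u : Real.exp 2 < 7.3890561 := by rw [e2]; nlinarith
  have e32 : Real.exp (3/2) = Real.exp 1 * Real.exp (1/2) := by rw [← Real.exp_add]; norm_num
  have e32u : Real.exp (3/2) < 4.4816891 := by rw [e32]; nlinarith
  have e52 : Real.exp (5/2) = Real.exp 2 * Real.exp (1/2) := by rw [← Real.exp_add]; norm_num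
  have e52u : Real.exp (5/2) < 12.1824940 := by rw [e52]; nlinarith
  have e52l : (12.1824:ℝ) < Real.exp (5/2) := by rw [e52]; nlinarith
  have e3 : Real.exp 3 = Real.exp 2 * Real.exp 1 := by rw [← Real.exp_add]; norm_num
  have e3l : (20.0855:ℝ) < Real.exp 3 := by rw [e3]; nlinarith
  have e5l : (148.41:ℝ) < Real.exp 5 := by
    have h5 : Real.exp 5 = Real.exp 2 * Real.exp 3 := by rw [← Real.exp_add]; norm_num
    rw [h5]; nlinarith
  have e9l : (8103:ℝ) < Real.exp 9 := by
    have h9 : Real.exp 9 = Real.exp 3 * Real.exp 3 * Real.exp 3 := by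
      rw [← Real.exp_add, ← Real.exp_add]; norm_num
    rw [h9]; nlinarith
  have pil : (3.141592:ℝ) < π := Real.pi_gt_d6
  have piu : π < 3.141593 := Real.pi_lt_d6
  -- log endpoint bounds
  have hlog008 : -(5*π/6) ≤ Real.log 0.08 := by
    have h125 : (12.5:ℝ) < Real.exp (5*π/6) := by
      have key : Real.exp (5*π/6) = Real.exp (5/2) * Real.exp (5*π/6 - 5/2) := by
        rw [← Real.exp_add]; ring_nf
      have h1 : (1:ℝ) + (5*π/6 - 5/2) ≤ Real.exp (5*π/6 - 5/2) := by
        have := Real.add_one_le_exp (5*π/6 - 5/2); linarith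
      have h2 : (1.117:ℝ) ≤ Real.exp (5*π/6 - 5/2) := by linarith
      have hm := mul_le_mul e52l.le h2 (by norm_num) (epos (5/2:ℝ)).le
      rw [key]; linarith
    have hle : Real.exp (-(5*π/6)) ≤ 0.08 := by
      rw [Real.exp_neg, inv_le_comm₀ (epos _) (by norm_num)]
      linarith
    calc -(5*π/6) = Real.log (Real.exp (-(5*π/6))) := (Real.log_exp _).symm
      _ ≤ Real.log 0.08 := Real.log_le_log (epos _) hle
  have hlog059 : Real.log 0.59 ≤ -(π/6) := by
    have hexps : Real.exp (π/6) < 100/59 := by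
      have key : Real.exp (π/6) = Real.exp (1/2) * Real.exp (π/6 - 1/2) := by
        rw [← Real.exp_add]; ring_nf
      have hx : π/6 - 1/2 ≤ 0.0235989 := by linarith
      have h2 : Real.exp (π/6 - 1/2) ≤ Real.exp 0.0235989 := Real.exp_le_exp.2 hx
      have h3 : Real.exp (0.0235989:ℝ) < 1.02418 := by
        have ha : (1:ℝ) - 0.0235989 ≤ Real.exp (-(0.0235989:ℝ)) := by
          have := Real.add_one_le_exp (-(0.0235989:ℝ)); linarith
        have hb : Real.exp (0.0235989:ℝ) * Real.exp (-(0.0235989:ℝ)) = 1 := by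
          rw [← Real.exp_add]; norm_num
        nlinarith [mul_le_mul_of_nonneg_left ha (epos (0.0235989:ℝ)).le]
      have hm := mul_le_mul ehu.le (h2.trans h3.le) (epos _).le (by norm_num : (0:ℝ) ≤ 1.6487213)
      rw [key]; linarith
    have hge : (0.59:ℝ) ≤ Real.exp (-(π/6)) := by
      rw [Real.exp_neg, le_inv_comm₀ (by norm_num) (epos _)]
      calc Real.exp (π/6) ≤ 100/59 := hexps.le
        _ ≤ (0.59:ℝ)⁻¹ := by norm_num
    calc Real.log 0.59 ≤ Real.log (Real.exp (-(π/6))) := Real.log_le_log (by norm_num) hge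
      _ = -(π/6) := Real.log_exp _
  -- splitting helpers
  have hsub : ∀ a b : ℝ, 0 ≤ a → Ioc a b ⊆ Ioi (0:ℝ) :=
    fun a b ha x hx => mem_Ioi.2 (lt_of_le_of_lt ha hx.1)
  have hadd : ∀ a b c : ℝ, 0 ≤ a → a ≤ b → b ≤ c →
      (∫ θ in Ioc a c, f θ) = (∫ θ in Ioc a b, f θ) + (∫ θ in Ioc b c, f θ) := by
    intro a b c ha hab hbc
    rw [← Ioc_union_Ioc_eq_Ioc hab hbc,
      setIntegral_union (Ioc_disjoint_Ioc_of_le le_rfl) measurableSet_Ioc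
        (hintf.mono_set (hsub a b ha)) (hintf.mono_set (hsub b c (ha.trans hab)))]
  have htop : (∫ θ in Ioi (0:ℝ), f θ) = (∫ θ in Ioc (0:ℝ) 3, f θ) + (∫ θ in Ioi (3:ℝ), f θ) := by
    rw [← Ioc_union_Ioi_eq_Ioi (by norm_num : (0:ℝ) ≤ 3),
      setIntegral_union Ioc_disjoint_Ioi_same measurableSet_Ioi
        (hintf.mono_set (hsub 0 3 le_rfl)) (hintf.mono_set (Ioi_subset_Ioi (by norm_num)))]
  -- value of ∫ c * θ on Ioc a b
  have hlin : ∀ c a b : ℝ, a ≤ b → (∫ θ in Ioc a b, c * θ) = c * ((b^2 - a^2)/2) := by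
    intro c a b hab
    rw [← intervalIntegral.integral_of_le hab, intervalIntegral.integral_const_mul, integral_id]
  -- generic monotone bound
  have hmono : ∀ (a b : ℝ) (g : ℝ → ℝ), 0 ≤ a → IntegrableOn g (Ioc a b) →
      (∀ θ ∈ Ioc a b, f θ ≤ g θ) → (∫ θ in Ioc a b, f θ) ≤ ∫ θ in Ioc a b, g θ :=
    fun a b g ha hg h =>
      setIntegral_mono_on (hintf.mono_set (hsub a b ha)) hg measurableSet_Ioc h
  -- negative pieces
  have hneg : ∀ a b q : ℝ, 0.08 ≤ a → a ≤ b → b ≤ 0.59 → 0 ≤ q →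
      q ≤ Real.exp (-4*b) → (∫ θ in Ioc a b, f θ) ≤ -(q/2) * ((b^2-a^2)/2) := by
    intro a b q h008 hab h059 hq hqe
    have hbd : ∀ θ ∈ Ioc a b, f θ ≤ -(q/2) * θ := by
      intro θ hθ
      obtain ⟨hθa, hθb⟩ := hθ
      have hθ0 : (0:ℝ) < θ := by linarith
      have hl1 : -(5*π/6) ≤ Real.log θ :=
        le_trans hlog008 (Real.log_le_log (by norm_num) (le_trans h008 hθa.le))
      have hl2 : Real.log θ ≤ -(π/6) :=
        le_trans (Real.log_le_log hθ0 (le_trans hθb h059)) hlog059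
      have hs : Real.sin (Real.log θ) ≤ -(1/2) := sin_le_neg_half hl1 hl2
      have hsinh : Real.sinh (θ * Real.sin (Real.log θ)) ≤ -(θ/2) := by
        have h1 : θ * Real.sin (Real.log θ) ≤ -(θ/2) := by nlinarith
        calc Real.sinh (θ * Real.sin (Real.log θ)) ≤ Real.sinh (-(θ/2)) := Real.sinh_le_sinh.2 h1
          _ = -Real.sinh (θ/2) := Real.sinh_neg _
          _ ≤ -(θ/2) := by
              have : θ/2 ≤ Real.sinh (θ/2) := Real.self_le_sinh_iff.2 (by linarith)
              linarith
      have hee : q ≤ Real.exp (-4*θ) :=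
        le_trans hqe (Real.exp_le_exp.2 (by linarith))
      have hfθ : f θ = Real.exp (-4*θ) * Real.sinh (θ * Real.sin (Real.log θ)) := rfl
      rw [hfθ]
      have hstep : Real.exp (-4*θ) * Real.sinh (θ * Real.sin (Real.log θ))
          ≤ Real.exp (-4*θ) * (-(θ/2)) :=
        mul_le_mul_of_nonneg_left hsinh (epos _).le
      have hstep2 : Real.exp (-4*θ) * (-(θ/2)) ≤ q * (-(θ/2)) :=
        mul_le_mul_of_nonpos_right hee (by linarith)
      calc Real.exp (-4*θ) * Real.sinh (θ * Real.sin (Real.log θ)) ≤ q * (-(θ/2)) :=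
            le_trans hstep hstep2
        _ = -(q/2) * θ := by ring
    calc (∫ θ in Ioc a b, f θ) ≤ ∫ θ in Ioc a b, -(q/2) * θ :=
          hmono a b _ (by linarith) ((continuous_const.mul continuous_id).integrableOn_Ioc) hbd
      _ = -(q/2) * ((b^2-a^2)/2) := hlin _ _ _ hab
  -- piece (0, 0.08]
  have hp0 : (∫ θ in Ioc (0:ℝ) 0.08, f θ) ≤ 1.05 * ((0.08^2 - 0^2)/2) := by
    have hbd : ∀ θ ∈ Ioc (0:ℝ) 0.08, f θ ≤ 1.05 * θ := by
      intro θ hθ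
      obtain ⟨h0, h08⟩ := hθ
      have hsle : Real.sinh (θ * Real.sin (Real.log θ)) ≤ Real.sinh θ :=
        Real.sinh_le_sinh.2 (by nlinarith [Real.sin_le_one (Real.log θ)])
      have hsinhθ : 0 ≤ Real.sinh θ := Real.sinh_nonneg_iff.2 h0.le
      have he1 : Real.exp (-4*θ) ≤ 1 := Real.exp_le_one_iff.2 (by linarith)
      have hfθ : f θ = Real.exp (-4*θ) * Real.sinh (θ * Real.sin (Real.log θ)) := rfl
      have hfb : f θ ≤ Real.sinh θ := by
        rw [hfθ]
        rcases le_or_gt (Real.sinh (θ * Real.sin (Real.log θ))) 0 with h|h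
        · exact le_trans (mul_nonpos_of_nonneg_of_nonpos (epos _).le h) hsinhθ
        · nlinarith [epos (-4*θ)]
      have hch : Real.cosh θ ≤ 1.05 := by
        have h8 : Real.exp θ ≤ Real.exp 0.08 := Real.exp_le_exp.2 h08
        have hinv : Real.exp (0.08:ℝ) * Real.exp (-(0.08:ℝ)) = 1 := by
          rw [← Real.exp_add]; norm_num
        have hlo : (1:ℝ) - 0.08 ≤ Real.exp (-(0.08:ℝ)) := by
          have := Real.add_one_le_exp (-(0.08:ℝ)); linarith
        have hu : Real.exp (0.08:ℝ) ≤ 1/0.92 := by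
          nlinarith [mul_le_mul_of_nonneg_left hlo (epos (0.08:ℝ)).le]
        have hl : Real.exp (-θ) ≤ 1 := Real.exp_le_one_iff.2 (by linarith)
        rw [Real.cosh_eq]
        linarith
      calc f θ ≤ Real.sinh θ := hfb
        _ ≤ θ * Real.cosh θ := sinh_le_mul_cosh h0.le
        _ ≤ 1.05 * θ := by nlinarith
    calc (∫ θ in Ioc (0:ℝ) 0.08, f θ) ≤ ∫ θ in Ioc (0:ℝ) 0.08, 1.05 * θ :=
          hmono _ _ _ le_rfl ((continuous_const.mul continuous_id).integrableOn_Ioc) hbd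
      _ = 1.05 * ((0.08^2 - 0^2)/2) := hlin _ _ _ (by norm_num)
  -- the five negative pieces
  have hq1 : (0.6065:ℝ) ≤ Real.exp (-4*0.125) := by
    have hinv : Real.exp (-(1/2):ℝ) * Real.exp (1/2) = 1 := by rw [← Real.exp_add]; norm_num
    have : (0.6065:ℝ) ≤ Real.exp (-(1/2):ℝ) := by
      nlinarith [epos (-(1/2):ℝ)]
    calc (0.6065:ℝ) ≤ Real.exp (-(1/2):ℝ) := this
      _ ≤ Real.exp (-4*0.125) := Real.exp_le_exp.2 (by norm_num)
  have hq2 : (0.3678:ℝ) ≤ Real.exp (-4*0.25) := by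
    have := Real.exp_neg_one_gt_d9
    calc (0.3678:ℝ) ≤ Real.exp (-1) := by linarith
      _ ≤ Real.exp (-4*0.25) := Real.exp_le_exp.2 (by norm_num)
  have hq3 : (0.2231:ℝ) ≤ Real.exp (-4*0.375) := by
    have hinv : Real.exp (-(3/2):ℝ) * Real.exp (3/2) = 1 := by rw [← Real.exp_add]; norm_num
    have : (0.2231:ℝ) ≤ Real.exp (-(3/2):ℝ) := by
      nlinarith [epos (-(3/2):ℝ)]
    calc (0.2231:ℝ) ≤ Real.exp (-(3/2):ℝ) := this
      _ ≤ Real.exp (-4*0.375) := Real.exp_le_exp.2 (by norm_num)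
  have hq4 : (0.1353:ℝ) ≤ Real.exp (-4*0.5) := by
    have hinv : Real.exp (-(2:ℝ)) * Real.exp 2 = 1 := by rw [← Real.exp_add]; norm_num
    have : (0.1353:ℝ) ≤ Real.exp (-(2:ℝ)) := by
      nlinarith [epos (-(2:ℝ))]
    calc (0.1353:ℝ) ≤ Real.exp (-(2:ℝ)) := this
      _ ≤ Real.exp (-4*0.5) := Real.exp_le_exp.2 (by norm_num)
  have hq5 : (0.0820:ℝ) ≤ Real.exp (-4*0.59) := by
    have hinv : Real.exp (-(5/2):ℝ) * Real.exp (5/2) = 1 := by rw [← Real.exp_add]; norm_num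
    have : (0.0820:ℝ) ≤ Real.exp (-(5/2):ℝ) := by
      nlinarith [epos (-(5/2):ℝ)]
    calc (0.0820:ℝ) ≤ Real.exp (-(5/2):ℝ) := this
      _ ≤ Real.exp (-4*0.59) := Real.exp_le_exp.2 (by norm_num)
  have hn1 := hneg 0.08 0.125 0.6065 (by norm_num) (by norm_num) (by norm_num) (by norm_num) hq1
  have hn2 := hneg 0.125 0.25 0.3678 (by norm_num) (by norm_num) (by norm_num) (by norm_num) hq2
  have hn3 := hneg 0.25 0.375 0.2231 (by norm_num) (by norm_num) (by norm_num) (by norm_num) hq3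
  have hn4 := hneg 0.375 0.5 0.1353 (by norm_num) (by norm_num) (by norm_num) (by norm_num) hq4
  have hn5 := hneg 0.5 0.59 0.0820 (by norm_num) (by norm_num) (by norm_num) (by norm_num) hq5
  -- piece (0.59, 1]
  have hp6 : (∫ θ in Ioc (0.59:ℝ) 1, f θ) ≤ 0 := by
    apply setIntegral_nonpos measurableSet_Ioc
    intro θ hθ
    obtain ⟨h59, h1⟩ := hθ
    have hθ0 : (0:ℝ) < θ := by linarith
    have hlog0 : Real.log θ ≤ 0 := Real.log_nonpos hθ0.le h1
    have hlogpi : -π ≤ Real.log θ := by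
      have := Real.log_le_log (by norm_num : (0:ℝ) < 0.59) h59.le
      have h008059 : Real.log 0.08 ≤ Real.log 0.59 := Real.log_le_log (by norm_num) (by norm_num)
      nlinarith [Real.pi_pos]
    have hs : Real.sin (Real.log θ) ≤ 0 := Real.sin_nonpos_of_nonpos_of_neg_pi_le hlog0 hlogpi
    exact mul_nonpos_of_nonneg_of_nonpos (epos _).le
      (Real.sinh_nonpos_iff.2 (mul_nonpos_of_nonneg_of_nonpos hθ0.le hs))
  -- piece (1, 3]
  have hp7 : (∫ θ in Ioc (1:ℝ) 3, f θ)
      ≤ (Real.exp (-3) * (5/27) + Real.exp (-5) * (7/125))/2 := by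
    set g : ℝ → ℝ := fun θ => (θ^2 - θ) * (Real.exp (-3*θ) + Real.exp (-5*θ)) / 2 with hgdef
    set G : ℝ → ℝ := fun x => -(Real.exp (-3*x) * (x^2/3 - x/9 - 1/27)
      + Real.exp (-5*x) * (x^2/5 - 3*x/25 - 3/125))/2 with hGdef
    have hgc : Continuous g := by
      apply Continuous.div_const
      exact ((continuous_id.pow 2).sub continuous_id).mul
        ((Real.continuous_exp.comp (continuous_const.mul continuous_id)).add
         (Real.continuous_exp.comp (continuous_const.mul continuous_id)))
    have hbd : ∀ θ ∈ Ioc (1:ℝ) 3, f θ ≤ g θ := by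
      intro θ hθ
      obtain ⟨hθ1, hθ3⟩ := hθ
      have hθ0 : (0:ℝ) < θ := by linarith
      have hfθ : f θ = Real.exp (-4*θ) * Real.sinh (θ * Real.sin (Real.log θ)) := rfl
      have hgθ : g θ = (θ^2 - θ) * (Real.exp (-3*θ) + Real.exp (-5*θ)) / 2 := rfl
      have hg0 : 0 ≤ g θ := by
        rw [hgθ]
        apply div_nonneg _ (by norm_num)
        apply mul_nonneg (by nlinarith) (by positivity)
      rcases le_or_gt (Real.sin (Real.log θ)) 0 with hs|hs
      · refine le_trans ?_ hg0
        rw [hfθ]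
        exact mul_nonpos_of_nonneg_of_nonpos (epos _).le
          (Real.sinh_nonpos_iff.2 (mul_nonpos_of_nonneg_of_nonpos hθ0.le hs))
      · have hlog0 : 0 ≤ Real.log θ := Real.log_nonneg hθ1.le
        have hsle : Real.sin (Real.log θ) ≤ Real.log θ := Real.sin_le hlog0
        have hlogsub : Real.log θ ≤ θ - 1 := by
          have := Real.log_le_sub_one_of_pos hθ0; linarith
        have hts : 0 ≤ θ * Real.sin (Real.log θ) := mul_nonneg hθ0.le hs.le
        have h1' : Real.sinh (θ * Real.sin (Real.log θ))
            ≤ (θ * Real.sin (Real.log θ)) * Real.cosh (θ * Real.sin (Real.log θ)) :=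
          sinh_le_mul_cosh hts
        have hc : Real.cosh (θ * Real.sin (Real.log θ)) ≤ Real.cosh θ := by
          apply Real.cosh_le_cosh.2
          rw [abs_of_nonneg hts, abs_of_nonneg hθ0.le]
          nlinarith [Real.sin_le_one (Real.log θ)]
        have hch0 : 0 < Real.cosh θ := Real.cosh_pos θ
        have h2' : Real.sinh (θ * Real.sin (Real.log θ)) ≤ θ * (θ-1) * Real.cosh θ := by
          have hss : θ * Real.sin (Real.log θ) ≤ θ * (θ - 1) := by nlinarith
          nlinarith [Real.cosh_pos (x := θ * Real.sin (Real.log θ))]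
        have e1' : Real.exp (-4*θ) * Real.exp θ = Real.exp (-3*θ) := by
          rw [← Real.exp_add]; ring_nf
        have e2' : Real.exp (-4*θ) * Real.exp (-θ) = Real.exp (-5*θ) := by
          rw [← Real.exp_add]; ring_nf
        have hkey : Real.exp (-4*θ) * (θ * (θ-1) * Real.cosh θ) = g θ := by
          rw [hgθ, Real.cosh_eq]
          linear_combination ((θ^2-θ)/2) * e1' + ((θ^2-θ)/2) * e2'
        calc f θ = Real.exp (-4*θ) * Real.sinh (θ * Real.sin (Real.log θ)) := hfθ
          _ ≤ Real.exp (-4*θ) * (θ * (θ-1) * Real.cosh θ) :=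
              mul_le_mul_of_nonneg_left h2' (epos _).le
          _ = g θ := hkey
    have hGderiv : ∀ x ∈ uIcc (1:ℝ) 3, HasDerivAt G (g x) x := by
      intro x _
      have h3e : HasDerivAt (fun x : ℝ => Real.exp (-3*x)) (Real.exp (-3*x) * (-3)) x := by
        have := (((hasDerivAt_id x).const_mul (-3:ℝ))).exp
        simpa using this
      have h5e : HasDerivAt (fun x : ℝ => Real.exp (-5*x)) (Real.exp (-5*x) * (-5)) x := by
        have := (((hasDerivAt_id x).const_mul (-5:ℝ))).exp
        simpa using this
      have hpoly3 : HasDerivAt (fun x : ℝ => x^2/3 - x/9 - 1/27) (2*x/3 - 1/9) x := by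
        have := (((hasDerivAt_pow 2 x).div_const 3).sub ((hasDerivAt_id x).div_const 9)).sub_const (1/27:ℝ)
        simpa using this
      have hpoly5 : HasDerivAt (fun x : ℝ => x^2/5 - 3*x/25 - 3/125) (2*x/5 - 3/25) x := by
        have h := (((hasDerivAt_pow 2 x).div_const 5).sub (((hasDerivAt_id x).const_mul (3:ℝ)).div_const 25)).sub_const (3/125:ℝ)
        simpa using h
      have hD := (((h3e.mul hpoly3).add (h5e.mul hpoly5)).neg).div_const 2
      refine hD.congr_deriv ?_
      rw [hgdef]
      ring
    have hftc := intervalIntegral.integral_eq_sub_of_hasDerivAt hGderiv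
      (hgc.intervalIntegrable 1 3)
    have hval : (∫ θ in Ioc (1:ℝ) 3, g θ) = G 3 - G 1 := by
      rw [← intervalIntegral.integral_of_le (by norm_num : (1:ℝ) ≤ 3)]
      exact hftc
    have hG3 : G 3 ≤ 0 := by
      have h3 : (0:ℝ) < Real.exp (-3*(3:ℝ)) * ((3:ℝ)^2/3 - 3/9 - 1/27) :=
        mul_pos (epos _) (by norm_num)
      have h4 : (0:ℝ) < Real.exp (-5*(3:ℝ)) * ((3:ℝ)^2/5 - 3*3/25 - 3/125) :=
        mul_pos (epos _) (by norm_num)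
      show -(Real.exp (-3*(3:ℝ)) * ((3:ℝ)^2/3 - (3:ℝ)/9 - 1/27)
        + Real.exp (-5*(3:ℝ)) * ((3:ℝ)^2/5 - 3*(3:ℝ)/25 - 3/125))/2 ≤ 0
      linarith
    have hG1 : G 1 = -(Real.exp (-3) * (5/27) + Real.exp (-5) * (7/125))/2 := by
      rw [hGdef]
      norm_num
    calc (∫ θ in Ioc (1:ℝ) 3, f θ) ≤ ∫ θ in Ioc (1:ℝ) 3, g θ :=
          hmono _ _ _ (by norm_num) (hgc.integrableOn_Ioc) hbd
      _ = G 3 - G 1 := hval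
      _ ≤ -G 1 := by linarith
      _ = (Real.exp (-3) * (5/27) + Real.exp (-5) * (7/125))/2 := by rw [hG1]; ring
  -- tail (3, ∞)
  have hItail : (∫ θ in Ioi (3:ℝ), Real.exp (-3*θ)) = Real.exp (-9)/3 := by
    have hd : ∀ x ∈ Ioi (3:ℝ), HasDerivAt (fun x : ℝ => -(Real.exp (-3*x)/3)) (Real.exp (-3*x)) x := by
      intro x _
      have h1 : HasDerivAt (fun y : ℝ => -3*y) (-3:ℝ) x := by
        simpa using (hasDerivAt_id x).const_mul (-3:ℝ)
      have h3 := (h1.exp.div_const 3).neg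
      have h4 : -(Real.exp (-3*x) * (-3) / 3) = Real.exp (-3*x) := by ring
      rw [← h4]
      exact h3
    have hcontF : ContinuousWithinAt (fun x : ℝ => -(Real.exp (-3*x)/3)) (Ici 3) 3 :=
      (((Real.continuous_exp.comp (continuous_const.mul continuous_id)).div_const 3).neg).continuousWithinAt
    have hlim : Tendsto (fun x : ℝ => -(Real.exp (-3*x)/3)) atTop (𝓝 0) := by
      have h0 : Tendsto (fun x : ℝ => Real.exp (-3*x)) atTop (𝓝 0) :=
        Real.tendsto_exp_atBot.comp (tendsto_id.const_mul_atTop_of_neg (by norm_num))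
      have := (h0.div_const 3).neg
      simpa using this
    have hres := integral_Ioi_of_hasDerivAt_of_tendsto hcontF hd
      (hexp3.mono_set (Ioi_subset_Ioi (by norm_num))) hlim
    rw [hres]
    norm_num
  have hp8 : (∫ θ in Ioi (3:ℝ), f θ) ≤ Real.exp (-9)/3 := by
    rw [← hItail]
    apply setIntegral_mono_on (hintf.mono_set (Ioi_subset_Ioi (by norm_num)))
      (hexp3.mono_set (Ioi_subset_Ioi (by norm_num))) measurableSet_Ioi
    intro θ hθ
    have hm : θ ∈ Ioi (0:ℝ) := mem_of_mem_of_subset hθ (Ioi_subset_Ioi (by norm_num))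
    have h1 := habs θ hm
    have h2 := le_abs_self (f θ)
    have h3 := epos (-3*θ)
    linarith
  -- numeric upper bounds for small exponentials
  have hinv3 : Real.exp (-3:ℝ) * Real.exp 3 = 1 := by rw [← Real.exp_add]; norm_num
  have he3u : Real.exp (-3:ℝ) ≤ 0.0498 := by nlinarith [epos (-3:ℝ)]
  have hinv5 : Real.exp (-5:ℝ) * Real.exp 5 = 1 := by rw [← Real.exp_add]; norm_num
  have he5u : Real.exp (-5:ℝ) ≤ 0.00674 := by nlinarith [epos (-5:ℝ)]
  have hinv9 : Real.exp (-9:ℝ) * Real.exp 9 = 1 := by rw [← Real.exp_add]; norm_num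
  have he9u : Real.exp (-9:ℝ) ≤ 0.000124 := by nlinarith [epos (-9:ℝ)]
  have hp7' : (∫ θ in Ioc (1:ℝ) 3, f θ) ≤ (0.0498 * (5/27) + 0.00674 * (7/125))/2 := by
    refine le_trans hp7 ?_
    linarith
  -- total bound
  have hJ : (∫ θ in Ioi (0:ℝ), f θ) < 0 := by
    rw [htop, hadd 0 0.08 3 (by norm_num) (by norm_num) (by norm_num),
      hadd 0.08 0.125 3 (by norm_num) (by norm_num) (by norm_num),
      hadd 0.125 0.25 3 (by norm_num) (by norm_num) (by norm_num),
      hadd 0.25 0.375 3 (by norm_num) (by norm_num) (by norm_num),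
      hadd 0.375 0.5 3 (by norm_num) (by norm_num) (by norm_num),
      hadd 0.5 0.59 3 (by norm_num) (by norm_num) (by norm_num),
      hadd 0.59 1 3 (by norm_num) (by norm_num) (by norm_num)]
    linarith [hp0, hn1, hn2, hn3, hn4, hn5, hp6, hp7', hp8, he9u]
  constructor
  · -- part 1 : I₂ - I₁ = 2 J < 0
    have hcont2 : ContinuousOn (fun θ : ℝ => Real.exp (-θ * (4 - Real.sin (Real.log θ)))) (Ioi 0) :=
      Real.continuous_exp.comp_continuousOn
        ((continuousOn_id.neg).mul (continuousOn_const.sub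
          (Real.continuous_sin.comp_continuousOn hlogc)))
    have hcont1 : ContinuousOn (fun θ : ℝ => Real.exp (-θ * (4 + Real.sin (Real.log θ)))) (Ioi 0) :=
      Real.continuous_exp.comp_continuousOn
        ((continuousOn_id.neg).mul (continuousOn_const.add
          (Real.continuous_sin.comp_continuousOn hlogc)))
    have hb2 : ∀ θ ∈ Ioi (0:ℝ), ‖Real.exp (-θ * (4 - Real.sin (Real.log θ)))‖
        ≤ Real.exp (-3*θ) := by
      intro θ hθ
      rw [mem_Ioi] at hθ
      rw [Real.norm_eq_abs, abs_of_pos (epos _)]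
      apply Real.exp_le_exp.2
      nlinarith [Real.sin_le_one (Real.log θ), Real.neg_one_le_sin (Real.log θ)]
    have hb1 : ∀ θ ∈ Ioi (0:ℝ), ‖Real.exp (-θ * (4 + Real.sin (Real.log θ)))‖
        ≤ Real.exp (-3*θ) := by
      intro θ hθ
      rw [mem_Ioi] at hθ
      rw [Real.norm_eq_abs, abs_of_pos (epos _)]
      apply Real.exp_le_exp.2
      nlinarith [Real.sin_le_one (Real.log θ), Real.neg_one_le_sin (Real.log θ)]
    have hint2 : IntegrableOn (fun θ : ℝ => Real.exp (-θ * (4 - Real.sin (Real.log θ)))) (Ioi 0) :=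
      Integrable.mono' hexp3 (hcont2.aestronglyMeasurable measurableSet_Ioi)
        ((ae_restrict_iff' measurableSet_Ioi).2 (ae_of_all _ hb2))
    have hint1 : IntegrableOn (fun θ : ℝ => Real.exp (-θ * (4 + Real.sin (Real.log θ)))) (Ioi 0) :=
      Integrable.mono' hexp3 (hcont1.aestronglyMeasurable measurableSet_Ioi)
        ((ae_restrict_iff' measurableSet_Ioi).2 (ae_of_all _ hb1))
    have hkey : ∀ θ ∈ Ioi (0:ℝ),
        Real.exp (-θ * (4 - Real.sin (Real.log θ))) - Real.exp (-θ * (4 + Real.sin (Real.log θ)))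
          = 2 * f θ := by
      intro θ _
      have h1 : -θ * (4 - Real.sin (Real.log θ)) = -4*θ + θ * Real.sin (Real.log θ) := by ring
      have h2 : -θ * (4 + Real.sin (Real.log θ)) = -4*θ + -(θ * Real.sin (Real.log θ)) := by ring
      have hfθ : f θ = Real.exp (-4*θ) * Real.sinh (θ * Real.sin (Real.log θ)) := rfl
      rw [h1, h2, Real.exp_add, Real.exp_add, hfθ, Real.sinh_eq]
      ring
    have hdiff : (∫ θ in Ioi (0:ℝ), Real.exp (-θ * (4 - Real.sin (Real.log θ))))
        - (∫ θ in Ioi (0:ℝ), Real.exp (-θ * (4 + Real.sin (Real.log θ))))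
        = ∫ θ in Ioi (0:ℝ), (Real.exp (-θ * (4 - Real.sin (Real.log θ)))
            - Real.exp (-θ * (4 + Real.sin (Real.log θ)))) :=
      (integral_sub hint2 hint1).symm
    have hcongr : (∫ θ in Ioi (0:ℝ), (Real.exp (-θ * (4 - Real.sin (Real.log θ)))
            - Real.exp (-θ * (4 + Real.sin (Real.log θ)))))
        = ∫ θ in Ioi (0:ℝ), 2 * f θ :=
      setIntegral_congr_fun measurableSet_Ioi (fun θ hθ => hkey θ hθ)
    rw [hdiff, hcongr, integral_const_mul]
    linarith
  · exact hJ
end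

section
/- Let S : [1,∞) → (0,∞) with S(t) = e^{t(4 + sin ln t)}. Then the limit lim_{p→∞} (p-1)·(∫₁^∞ S(t)^{1/(1-p)} dt)^{-1} does not exist: with the substitution x = 1/(p-1), y = xt, the quantity equals (∫_x^∞ e^{-θ(4+sin ln(θ/x))} dθ)^{-1}, which has different limits along x_k = e^{-2kπ} and x_k' = e^{-2kπ+π}. -/
open Filter MeasureTheory Real Set


lemma exp_le_inv_one_sub {t : ℝ} (ht : t < 1) : exp t ≤ (1 - t)⁻¹ := by
  have h1 : (0:ℝ) < 1 - t := by linarith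
  rw [le_inv_comm₀ (exp_pos t) h1]
  calc (1 - t) = -t + 1 := by ring
  _ ≤ exp (-t) := Real.add_one_le_exp (-t)
  _ = (exp t)⁻¹ := Real.exp_neg t

lemma expe_lb (n : ℕ) (hn : n ≠ 0 := by norm_num) : (2.7182818283:ℝ) ^ n < exp n := by
  have h : exp (n:ℝ) = exp 1 ^ n := by rw [← Real.exp_nat_mul]; norm_num
  rw [h]
  exact pow_lt_pow_left₀ Real.exp_one_gt_d9 (by norm_num) hn

lemma expe_ub (n : ℕ) (hn : n ≠ 0) : exp (n:ℝ) < (2.7182818286:ℝ) ^ n := by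
  have h : exp (n:ℝ) = exp 1 ^ n := by rw [← Real.exp_nat_mul]; norm_num
  rw [h]
  exact pow_lt_pow_left₀ Real.exp_one_lt_d9 (exp_pos 1).le hn

lemma exp3_gt : (20:ℝ) < exp 3 := by
  have := expe_lb 3; push_cast at this; nlinarith

lemma exp2pi_gt : (500:ℝ) < exp (2*π) := by
  have hπ : 3.141592 < π := Real.pi_gt_d6
  have h : exp (2*π) = exp 6 * exp (2*π - 6) := by rw [← Real.exp_add]; ring_nf
  have h6 := expe_lb 6
  push_cast at h6
  have h2 : (2*π - 6) + 1 ≤ exp (2*π - 6) := Real.add_one_le_exp _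
  nlinarith [Real.exp_pos (2*π-6)]

lemma exp3pi_gt : (10000:ℝ) < exp (3*π) := by
  have hπ : 3.141592 < π := Real.pi_gt_d6
  have h : exp (3*π) = exp 9 * exp (3*π - 9) := by rw [← Real.exp_add]; ring_nf
  have h6 := expe_lb 9
  push_cast at h6
  have h2 : (3*π - 9) + 1 ≤ exp (3*π - 9) := Real.add_one_le_exp _
  nlinarith [Real.exp_pos (3*π-9)]

lemma exp3pi4_gt : (10:ℝ) < exp (3*π/4) := by
  by_contra h
  push_neg at h
  have h4 : exp (3*π/4) ^ (4:ℕ) = exp (3*π) := by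
    rw [← Real.exp_nat_mul]; ring_nf
  have : exp (3*π) ≤ 10^(4:ℕ) := by
    rw [← h4]; exact pow_le_pow_left₀ (exp_pos _).le h 4
  nlinarith [exp3pi_gt]

lemma exppi_lt : exp π < 24 := by
  have hπ : π < 3.141593 := Real.pi_lt_d6
  have hπ' : 3.141592 < π := Real.pi_gt_d6
  have h : exp π = exp 3 * exp (π - 3) := by rw [← Real.exp_add]; ring_nf
  have h2 : exp (π - 3) ≤ (1 - (π-3))⁻¹ := exp_le_inv_one_sub (by linarith)
  have h5 : (1 - (π-3))⁻¹ ≤ ((1:ℝ) - 0.141593)⁻¹ := by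
    apply inv_anti₀ (by norm_num) (by linarith)
  have h6 := expe_ub 3 (by norm_num)
  push_cast at h6
  nlinarith [Real.exp_pos (π-3), Real.exp_pos 3]

lemma exppi4_lt : exp (π/4) < 5/2 := by
  by_contra h
  push_neg at h
  have h4 : exp (π/4) ^ (4:ℕ) = exp π := by rw [← Real.exp_nat_mul]; ring_nf
  have : (5/2:ℝ)^(4:ℕ) ≤ exp π := by rw [← h4]; exact pow_le_pow_left₀ (by norm_num) h 4
  nlinarith [exppi_lt]

lemma exp85_lt : exp (8/5) < 5 := by
  by_contra h
  push_neg at h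
  have h5 : exp (8/5:ℝ) ^ (5:ℕ) = exp 8 := by rw [← Real.exp_nat_mul]; ring_nf
  have h1 : (5:ℝ)^(5:ℕ) ≤ exp 8 := by rw [← h5]; exact pow_le_pow_left₀ (by norm_num) h 5
  have h2 := expe_ub 8 (by norm_num)
  push_cast at h2
  nlinarith

lemma exppi_gt : (20:ℝ) < exp π :=
  lt_trans exp3_gt (Real.exp_lt_exp.mpr Real.pi_gt_three)

lemma sqrt2_gt : (1.4142:ℝ) ≤ Real.sqrt 2 := by
  rw [Real.le_sqrt (by norm_num) (by norm_num)]; norm_num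


noncomputable def g1 : ℝ → ℝ := fun θ => exp (-(θ * (4 + sin (log θ))))
noncomputable def g2 : ℝ → ℝ := fun θ => exp (-(θ * (4 - sin (log θ))))

lemma intExp {b : ℝ} (hb : 0 < b) (a : ℝ) :
    ∫ θ in Ioi a, exp (-(b * θ)) = exp (-(b * a)) / b := by
  have h := integral_comp_mul_left_Ioi (fun u => exp (-u)) a hb
  simp only [smul_eq_mul] at h
  rw [h, integral_exp_neg_Ioi]
  ring

lemma g1_meas : Measurable g1 :=
  (measurable_id.mul ((measurable_const.add (Real.measurable_sin.comp Real.measurable_log)))).neg.exp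

lemma g2_meas : Measurable g2 :=
  (measurable_id.mul ((measurable_const.sub (Real.measurable_sin.comp Real.measurable_log)))).neg.exp

lemma g1_le {θ : ℝ} (hθ : 0 < θ) : g1 θ ≤ exp (-(3 * θ)) := by
  apply Real.exp_le_exp.mpr
  nlinarith [Real.neg_one_le_sin (log θ)]

lemma g1_ge {θ : ℝ} (hθ : 0 < θ) : exp (-(5 * θ)) ≤ g1 θ := by
  apply Real.exp_le_exp.mpr
  nlinarith [Real.sin_le_one (log θ)]

lemma g2_le {θ : ℝ} (hθ : 0 < θ) : g2 θ ≤ exp (-(3 * θ)) := by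
  apply Real.exp_le_exp.mpr
  nlinarith [Real.sin_le_one (log θ)]

lemma g2_ge {θ : ℝ} (hθ : 0 < θ) : exp (-(5 * θ)) ≤ g2 θ := by
  apply Real.exp_le_exp.mpr
  nlinarith [Real.neg_one_le_sin (log θ)]

lemma expneg3_int (x : ℝ) : IntegrableOn (fun θ : ℝ => exp (-(3 * θ))) (Ioi x) := by
  simpa [neg_mul] using exp_neg_integrableOn_Ioi x (by norm_num : (0:ℝ) < 3)

lemma g_int {g : ℝ → ℝ} (hm : Measurable g) (hpos : ∀ θ, 0 < g θ)
    (hle : ∀ θ, 0 < θ → g θ ≤ exp (-(3 * θ))) {x : ℝ} (hx : 0 ≤ x) :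
    IntegrableOn g (Ioi x) := by
  apply Integrable.mono' (expneg3_int x) hm.aestronglyMeasurable
  filter_upwards [ae_restrict_mem measurableSet_Ioi] with θ hθ
  rw [Real.norm_eq_abs, abs_of_pos (hpos θ)]
  exact hle θ (lt_of_le_of_lt hx hθ)

lemma g1_int {x : ℝ} (hx : 0 ≤ x) : IntegrableOn g1 (Ioi x) :=
  g_int g1_meas (fun θ => exp_pos _) (fun θ hθ => g1_le hθ) hx

lemma g2_int {x : ℝ} (hx : 0 ≤ x) : IntegrableOn g2 (Ioi x) :=
  g_int g2_meas (fun θ => exp_pos _) (fun θ hθ => g2_le hθ) hx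

lemma g_le_third {g : ℝ → ℝ} (hm : Measurable g) (hpos : ∀ θ, 0 < g θ)
    (hle : ∀ θ, 0 < θ → g θ ≤ exp (-(3 * θ))) {x : ℝ} (hx : 0 ≤ x) :
    ∫ θ in Ioi x, g θ ≤ 1/3 := by
  have h1 : ∫ θ in Ioi x, g θ ≤ ∫ θ in Ioi x, exp (-(3 * θ)) := by
    apply setIntegral_mono_on (g_int hm hpos hle hx) (expneg3_int x) measurableSet_Ioi
    exact fun θ hθ => hle θ (lt_of_le_of_lt hx hθ)
  rw [intExp (by norm_num : (0:ℝ) < 3) x] at h1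
  have : exp (-(3*x)) ≤ 1 := by
    rw [Real.exp_le_one_iff]; nlinarith
  linarith

lemma g1_le_third {x : ℝ} (hx : 0 ≤ x) : ∫ θ in Ioi x, g1 θ ≤ 1/3 :=
  g_le_third g1_meas (fun θ => exp_pos _) (fun θ hθ => g1_le hθ) hx

lemma g2_le_third {x : ℝ} (hx : 0 ≤ x) : ∫ θ in Ioi x, g2 θ ≤ 1/3 :=
  g_le_third g2_meas (fun θ => exp_pos _) (fun θ hθ => g2_le hθ) hx

lemma g2_int_pos {x : ℝ} (hx : 0 ≤ x) : 0 < ∫ θ in Ioi x, g2 θ := by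
  rw [setIntegral_pos_iff_support_of_nonneg_ae]
  · have : Function.support g2 = univ := by
      ext θ; simp [g2, Function.mem_support, (exp_pos _).ne']
    rw [this, univ_inter]
    simp [Real.volume_Ioi]
  · filter_upwards with θ; exact (exp_pos _).le
  · exact g2_int hx


lemma P1 {θ : ℝ} (hθ : 0 < θ) : -(2*θ) ≤ g1 θ - g2 θ := by
  have e1 : exp (-(5*θ)) ≤ g1 θ := by
    apply Real.exp_le_exp.mpr; nlinarith [Real.sin_le_one (log θ)]
  have e2 : g2 θ ≤ exp (-(3*θ)) := by
    apply Real.exp_le_exp.mpr; nlinarith [Real.sin_le_one (log θ)]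
  have e3 : exp (-(5*θ)) = exp (-(3*θ)) * exp (-(2*θ)) := by
    rw [← Real.exp_add]; ring_nf
  have e4 : exp (-(3*θ)) ≤ 1 := by rw [Real.exp_le_one_iff]; linarith
  have e5 : exp (-(2*θ)) ≤ 1 := by rw [Real.exp_le_one_iff]; linarith
  have e6 : 1 - 2*θ ≤ exp (-(2*θ)) := by
    have := Real.add_one_le_exp (-(2*θ)); linarith
  nlinarith [mul_nonneg (sub_nonneg.mpr e4) (sub_nonneg.mpr e5), Real.exp_pos (-(3*θ))]

lemma P2 {θ : ℝ} (h1 : exp (-π) < θ) (h2 : θ ≤ 1) : 0 ≤ g1 θ - g2 θ := by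
  have hθ : 0 < θ := lt_trans (exp_pos _) h1
  have hlog : -π < log θ := (Real.lt_log_iff_exp_lt hθ).mpr h1
  have hs : sin (log θ) ≤ 0 :=
    Real.sin_nonpos_of_nonpos_of_neg_pi_le (Real.log_nonpos hθ.le h2) hlog.le
  have : g2 θ ≤ g1 θ := by
    apply Real.exp_le_exp.mpr; nlinarith
  linarith

lemma sin_bnd {u : ℝ} (h1 : -(3*π/4) ≤ u) (h2 : u ≤ -(π/4)) :
    sin u ≤ -(Real.sqrt 2/2) := by
  have hc : cos (u + π/2) = -sin u := Real.cos_add_pi_div_two u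
  have hπ : 0 < π := Real.pi_pos
  have hv1 : -(π/4) ≤ u + π/2 := by linarith
  have hv2 : u + π/2 ≤ π/4 := by linarith
  have habs : |u + π/2| ≤ π/4 := abs_le.mpr ⟨hv1, hv2⟩
  have h3 : cos (π/4) ≤ cos |u + π/2| :=
    Real.cos_le_cos_of_nonneg_of_le_pi (abs_nonneg _) (by linarith) habs
  rw [Real.cos_abs, Real.cos_pi_div_four] at h3
  nlinarith [hc, h3]

lemma P3 {θ : ℝ} (h1 : 1/10 < θ) (h2 : θ ≤ 2/5) :
    Real.sqrt 2/5 * θ ≤ g1 θ - g2 θ := by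
  have hθ : 0 < θ := by linarith
  have hl1 : -(3*π/4) < log θ := by
    rw [Real.lt_log_iff_exp_lt hθ]
    have : exp (-(3*π/4)) < 1/10 := by
      rw [Real.exp_neg, inv_lt_comm₀ (exp_pos _) (by norm_num)]
      simpa using exp3pi4_gt
    linarith
  have hl2 : log θ ≤ -(π/4) := by
    rw [Real.log_le_iff_le_exp hθ]
    have : (2/5:ℝ) < exp (-(π/4)) := by
      rw [Real.exp_neg, lt_inv_comm₀ (by norm_num) (exp_pos _)]
      linarith [exppi4_lt]
    linarith
  have hs : sin (log θ) ≤ -(Real.sqrt 2/2) := sin_bnd hl1.le hl2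
  set s := sin (log θ) with hs_def
  have hg1 : g1 θ = exp (-(4*θ)) * exp (-(θ*s)) := by
    rw [← Real.exp_add]; unfold g1; ring_nf; rw [hs_def]
  have hg2 : g2 θ = exp (-(4*θ)) * exp (θ*s) := by
    rw [← Real.exp_add]; unfold g2; ring_nf; rw [hs_def]
  have hu : 0 < -(θ*s) := by nlinarith [Real.sqrt_pos.mpr (by norm_num : (0:ℝ) < 2)]
  have hsinh : -(θ*s) ≤ sinh (-(θ*s)) := Real.self_le_sinh_iff.mpr hu.le
  have hsinh2 : sinh (-(θ*s)) = (exp (-(θ*s)) - exp (θ*s)) / 2 := by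
    rw [Real.sinh_eq]; ring_nf
  have hd : exp (-(θ*s)) - exp (θ*s) ≥ 2 * (-(θ*s)) := by
    rw [hsinh2] at hsinh; linarith
  have he4 : (1/5:ℝ) ≤ exp (-(4*θ)) := by
    have : exp (-(4*θ)) ≥ exp (-(8/5)) := Real.exp_le_exp.mpr (by linarith)
    have h5 : exp (-(8/5:ℝ)) > 1/5 := by
      rw [Real.exp_neg, gt_iff_lt, lt_inv_comm₀ (by norm_num) (exp_pos _)]
      linarith [exp85_lt]
    linarith
  have hsqrt : (0:ℝ) < Real.sqrt 2 := Real.sqrt_pos.mpr (by norm_num)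
  have key : g1 θ - g2 θ = exp (-(4*θ)) * (exp (-(θ*s)) - exp (θ*s)) := by
    rw [hg1, hg2]; ring
  have hts : Real.sqrt 2 * θ ≤ 2 * (-(θ*s)) := by nlinarith
  calc Real.sqrt 2/5 * θ = (1/5) * (Real.sqrt 2 * θ) := by ring
  _ ≤ exp (-(4*θ)) * (2 * (-(θ*s))) := by
      apply mul_le_mul he4 hts (by nlinarith) (exp_pos _).le
  _ ≤ exp (-(4*θ)) * (exp (-(θ*s)) - exp (θ*s)) := by
      apply mul_le_mul_of_nonneg_left hd (exp_pos _).le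
  _ = g1 θ - g2 θ := key.symm

lemma P4 {θ : ℝ} (hθ : 0 < θ) : -(exp (-(3*θ))) ≤ g1 θ - g2 θ := by
  have e2 : g2 θ ≤ exp (-(3*θ)) := by
    apply Real.exp_le_exp.mpr; nlinarith [Real.sin_le_one (log θ)]
  have := Real.exp_pos (-(θ * (4 + sin (log θ))))
  unfold g1 g2 at *
  linarith

lemma split_Ioi {h : ℝ → ℝ} {a b : ℝ} (hab : a ≤ b) (hi : IntegrableOn h (Ioi a)) :
    ∫ θ in Ioi a, h θ = (∫ θ in Ioc a b, h θ) + ∫ θ in Ioi b, h θ := by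
  rw [← Ioc_union_Ioi_eq_Ioi hab,
    setIntegral_union Ioc_disjoint_Ioi_same measurableSet_Ioi
      (hi.mono_set Ioc_subset_Ioi_self) (hi.mono_set (Ioi_subset_Ioi hab))]

lemma expneg_pi_lt : exp (-π) < 1/10 := by
  rw [Real.exp_neg, inv_lt_comm₀ (exp_pos _) (by norm_num)]
  linarith [exppi_gt]

lemma main_est {y : ℝ} (h0 : 0 < y) (h1 : y ≤ exp (-π)) :
    1/2000 ≤ ∫ θ in Ioi y, (g1 θ - g2 θ) := by
  set c := exp (-π) with hc
  have hc0 : 0 < c := exp_pos _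
  have hc10 : c < 1/10 := expneg_pi_lt
  have hint : IntegrableOn (fun θ => g1 θ - g2 θ) (Ioi y) := (g1_int h0.le).sub (g2_int h0.le)
  have hyc : y ≤ c := h1
  -- split into 5 pieces
  rw [split_Ioi hyc hint]
  have hint2 : IntegrableOn (fun θ => g1 θ - g2 θ) (Ioi c) :=
    hint.mono_set (Ioi_subset_Ioi hyc)
  rw [split_Ioi (le_of_lt hc10) hint2]
  have hint3 : IntegrableOn (fun θ => g1 θ - g2 θ) (Ioi (1/10 : ℝ)) :=
    hint2.mono_set (Ioi_subset_Ioi hc10.le)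
  rw [split_Ioi (by norm_num : (1/10:ℝ) ≤ 2/5) hint3]
  have hint4 : IntegrableOn (fun θ => g1 θ - g2 θ) (Ioi (2/5 : ℝ)) :=
    hint3.mono_set (Ioi_subset_Ioi (by norm_num))
  rw [split_Ioi (by norm_num : (2/5:ℝ) ≤ 1) hint4]
  have hint5 : IntegrableOn (fun θ => g1 θ - g2 θ) (Ioi (1 : ℝ)) :=
    hint4.mono_set (Ioi_subset_Ioi (by norm_num))
  -- piece 1
  have B1 : -(1/250) ≤ ∫ θ in Ioc y c, (g1 θ - g2 θ) := by
    have hmono : ∫ θ in Ioc y c, (-(2*c)) ≤ ∫ θ in Ioc y c, (g1 θ - g2 θ) := by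
      apply setIntegral_mono_on (integrableOn_const measure_Ioc_lt_top.ne)
        (hint.mono_set Ioc_subset_Ioi_self) measurableSet_Ioc
      intro θ hθ
      have := P1 (lt_of_lt_of_le h0 hθ.1.le)
      nlinarith [hθ.2]
    rw [setIntegral_const] at hmono
    rw [Real.volume_real_Ioc_of_le hyc] at hmono
    have hcsq : c * c < 1/500 := by
      have : c * c = exp (-(2*π)) := by
        rw [hc, ← Real.exp_add]; ring_nf
      rw [this, Real.exp_neg, inv_lt_comm₀ (exp_pos _) (by norm_num)]
      linarith [exp2pi_gt]
    have : (c - y) * (2*c) ≤ 2 * (c*c) := by nlinarith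
    have hsm : (c - y) • (-(2*c)) = -((c-y)*(2*c)) := by
      rw [smul_eq_mul]; ring
    rw [hsm] at hmono
    linarith
  -- piece 2
  have B2 : 0 ≤ ∫ θ in Ioc c (1/10:ℝ), (g1 θ - g2 θ) := by
    apply setIntegral_nonneg measurableSet_Ioc
    intro θ hθ
    exact P2 hθ.1 (by linarith [hθ.2])
  -- piece 3
  have B3 : Real.sqrt 2/5 * (3/40) ≤ ∫ θ in Ioc (1/10:ℝ) (2/5:ℝ), (g1 θ - g2 θ) := by
    have hmono : ∫ θ in Ioc (1/10:ℝ) (2/5:ℝ), (Real.sqrt 2/5 * θ)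
        ≤ ∫ θ in Ioc (1/10:ℝ) (2/5:ℝ), (g1 θ - g2 θ) := by
      apply setIntegral_mono_on
        ((continuous_const.mul continuous_id).integrableOn_Ioc)
        (hint3.mono_set Ioc_subset_Ioi_self) measurableSet_Ioc
      intro θ hθ; exact P3 hθ.1 hθ.2
    have hval : ∫ θ in Ioc (1/10:ℝ) (2/5:ℝ), (Real.sqrt 2/5 * θ)
        = Real.sqrt 2/5 * (3/40) := by
      rw [← intervalIntegral.integral_of_le (by norm_num : (1/10:ℝ) ≤ 2/5)]
      rw [intervalIntegral.integral_const_mul, integral_id]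
      norm_num
    linarith [hval ▸ hmono]
  -- piece 4
  have B4 : 0 ≤ ∫ θ in Ioc (2/5:ℝ) (1:ℝ), (g1 θ - g2 θ) := by
    apply setIntegral_nonneg measurableSet_Ioc
    intro θ hθ
    exact P2 (by linarith [hθ.1]) hθ.2
  -- piece 5
  have B5 : -(1/60) ≤ ∫ θ in Ioi (1:ℝ), (g1 θ - g2 θ) := by
    have hmono : ∫ θ in Ioi (1:ℝ), (-(exp (-(3*θ)))) ≤ ∫ θ in Ioi (1:ℝ), (g1 θ - g2 θ) := by
      apply setIntegral_mono_on (expneg3_int 1).neg hint5 measurableSet_Ioi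
      intro θ hθ; exact P4 (by linarith [mem_Ioi.mp hθ])
    have hval : ∫ θ in Ioi (1:ℝ), (-(exp (-(3*θ)))) = -(exp (-(3:ℝ))/3) := by
      rw [integral_neg, intExp (by norm_num : (0:ℝ) < 3) 1]
      norm_num
    have hexp3 : exp (-(3:ℝ))/3 ≤ 1/60 := by
      rw [Real.exp_neg]
      have : (20:ℝ) < exp 3 := exp3_gt
      have h2 : (exp 3)⁻¹ < 1/20 := by
        rw [inv_lt_comm₀ (exp_pos _) (by norm_num)]; linarith
      linarith
    rw [hval] at hmono
    linarith
  have hs2 := sqrt2_gt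
  nlinarith [B1, B2, B3, B4, B5]

lemma key_diff {x x' : ℝ} (hx : 0 < x) (hxx : x ≤ x') (hx' : x' ≤ exp (-π)) :
    1/2000 ≤ (∫ θ in Ioi x, g1 θ) - (∫ θ in Ioi x', g2 θ) := by
  have hx'0 : 0 < x' := lt_of_lt_of_le hx hxx
  have h1 : ∫ θ in Ioi x', g1 θ ≤ ∫ θ in Ioi x, g1 θ := by
    apply setIntegral_mono_set (g1_int hx.le)
    · filter_upwards with θ; exact (exp_pos _).le
    · exact (Ioi_subset_Ioi hxx).eventuallyLE
  have h2 : ∫ θ in Ioi x', (g1 θ - g2 θ)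
      = (∫ θ in Ioi x', g1 θ) - ∫ θ in Ioi x', g2 θ :=
    integral_sub (g1_int hx'0.le) (g2_int hx'0.le)
  have h3 := main_est hx'0 hx'
  linarith

lemma inv_diff {A B : ℝ} (hB : 0 < B) (hA3 : A ≤ 1/3) (hB3 : B ≤ 1/3)
    (hd : 1/2000 ≤ A - B) : 9/2000 ≤ B⁻¹ - A⁻¹ := by
  have hA : 0 < A := by linarith
  have h : B⁻¹ - A⁻¹ = (A - B) / (B * A) := inv_sub_inv hB.ne' hA.ne'
  rw [h, le_div_iff₀ (by positivity)]
  nlinarith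

lemma reduction {x : ℝ} (hx : 0 < x) :
    ((1 + 1/x) - 1) * (∫ t in Ioi (1:ℝ),
        exp (t * (4 + sin (log t))) ^ (1 / (1 - (1 + 1/x))))⁻¹
      = (∫ θ in Ioi x, exp (-(θ * (4 + sin (log θ - log x)))))⁻¹ := by
  have hexp : 1 / (1 - (1 + 1/x)) = -x := by field_simp; ring
  rw [hexp]
  have hcongr : EqOn (fun t => exp (t * (4 + sin (log t))) ^ (-x))
      (fun t => exp (-((x*t) * (4 + sin (log (x*t) - log x))))) (Ioi (1:ℝ)) := by
    intro t ht
    have ht0 : 0 < t := lt_trans one_pos ht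
    simp only
    rw [← Real.exp_mul, Real.log_mul hx.ne' ht0.ne']
    congr 1
    ring
  rw [setIntegral_congr_fun measurableSet_Ioi hcongr]
  have hcv := integral_comp_mul_left_Ioi
    (fun θ => exp (-(θ * (4 + sin (log θ - log x))))) 1 hx
  simp only [mul_one, smul_eq_mul] at hcv
  rw [hcv, mul_inv, inv_inv]
  have hJ : ((1 + 1/x) - 1) = x⁻¹ := by field_simp; ring
  rw [hJ, ← mul_assoc, inv_mul_cancel₀ hx.ne', one_mul]

set_option maxHeartbeats 1000000 in
lemma red1 (k : ℕ) :
    ((1 + 1/exp (-(2*π*(k:ℝ)))) - 1) * (∫ t in Ioi (1:ℝ),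
        exp (t * (4 + sin (log t))) ^ (1 / (1 - (1 + 1/exp (-(2*π*(k:ℝ)))))))⁻¹
      = (∫ θ in Ioi (exp (-(2*π*(k:ℝ)))), g1 θ)⁻¹ := by
  rw [reduction (exp_pos _)]
  congr 1
  apply setIntegral_congr_fun measurableSet_Ioi
  intro θ _
  simp only [Real.log_exp]
  rw [show log θ - -(2*π*(k:ℝ)) = log θ + (k:ℝ) * (2*π) by ring,
    Real.sin_add_nat_mul_two_pi]
  rfl

set_option maxHeartbeats 1000000 in
lemma red2 (k : ℕ) :
    ((1 + 1/exp (π - 2*π*(k:ℝ))) - 1) * (∫ t in Ioi (1:ℝ),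
        exp (t * (4 + sin (log t))) ^ (1 / (1 - (1 + 1/exp (π - 2*π*(k:ℝ))))))⁻¹
      = (∫ θ in Ioi (exp (π - 2*π*(k:ℝ))), g2 θ)⁻¹ := by
  rw [reduction (exp_pos _)]
  congr 1
  apply setIntegral_congr_fun measurableSet_Ioi
  intro θ _
  simp only [Real.log_exp]
  rw [show log θ - (π - 2*π*(k:ℝ)) = (log θ - π) + (k:ℝ) * (2*π) by ring,
    Real.sin_add_nat_mul_two_pi, Real.sin_sub_pi]
  rw [show (4 + -sin (log θ)) = (4 - sin (log θ)) by ring]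
  rfl

/-- For `S(t) = e^{t(4 + sin ln t)}`, the limit
`lim_{p→∞} (p-1)·(∫₁^∞ S(t)^{1/(1-p)} dt)⁻¹` does not exist. -/
theorem capacity_limit_does_not_exist :
    ¬ ∃ L : ℝ,
      Filter.Tendsto
        (fun p : ℝ =>
          (p - 1) *
            (∫ t in Set.Ioi (1 : ℝ),
                Real.exp (t * (4 + Real.sin (Real.log t))) ^ (1 / (1 - p)))⁻¹)
        Filter.atTop (nhds L) := by
  rintro ⟨L, hL⟩
  set F : ℝ → ℝ := fun p =>
    (p - 1) * (∫ t in Set.Ioi (1 : ℝ),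
      Real.exp (t * (4 + Real.sin (Real.log t))) ^ (1 / (1 - p)))⁻¹ with hF
  set P : ℕ → ℝ := fun k => 1 + 1/exp (-(2*π*(k:ℝ))) with hP
  set Q : ℕ → ℝ := fun k => 1 + 1/exp (π - 2*π*(k:ℝ)) with hQ
  have hmul : Tendsto (fun k : ℕ => 2*π*(k:ℝ)) atTop atTop := by
    apply Tendsto.const_mul_atTop (by positivity : (0:ℝ) < 2*π)
    exact tendsto_natCast_atTop_atTop
  have hPt : Tendsto P atTop atTop := by
    have : P = fun k : ℕ => 1 + exp (2*π*(k:ℝ)) := by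
      funext k; simp [hP, Real.exp_neg, one_div]
    rw [this]
    exact tendsto_atTop_add_const_left _ 1 (tendsto_exp_atTop.comp hmul)
  have hQt : Tendsto Q atTop atTop := by
    have : Q = fun k : ℕ => 1 + exp (2*π*(k:ℝ) - π) := by
      funext k
      simp only [hQ, one_div, ← Real.exp_neg]
      rw [show -(π - 2*π*(k:ℝ)) = 2*π*(k:ℝ) - π by ring]
    rw [this]
    apply tendsto_atTop_add_const_left _ 1
    exact tendsto_exp_atTop.comp (tendsto_atTop_add_const_right _ (-π) hmul)
  have h1 : Tendsto (F ∘ P) atTop (nhds L) := hL.comp hPt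
  have h2 : Tendsto (F ∘ Q) atTop (nhds L) := hL.comp hQt
  have hdiff : Tendsto (fun k => F (Q k) - F (P k)) atTop (nhds 0) := by
    have := h2.sub h1
    rw [sub_self] at this
    exact this
  have hev : ∀ᶠ k in atTop, F (Q k) - F (P k) < 9/2000 :=
    hdiff.eventually (gt_mem_nhds (by norm_num : (0:ℝ) < 9/2000))
  have hkey : ∀ k : ℕ, 1 ≤ k → 9/2000 ≤ F (Q k) - F (P k) := by
    intro k hk
    have hx0 : (0:ℝ) < exp (-(2*π*(k:ℝ))) := exp_pos _
    have hxx : exp (-(2*π*(k:ℝ))) ≤ exp (π - 2*π*(k:ℝ)) :=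
      Real.exp_le_exp.mpr (by linarith [Real.pi_pos])
    have hx' : exp (π - 2*π*(k:ℝ)) ≤ exp (-π) := by
      apply Real.exp_le_exp.mpr
      have : (1:ℝ) ≤ (k:ℝ) := by exact_mod_cast hk
      nlinarith [Real.pi_pos]
    have hA := key_diff hx0 hxx hx'
    have hFP : F (P k) = (∫ θ in Ioi (exp (-(2*π*(k:ℝ)))), g1 θ)⁻¹ := red1 k
    have hFQ : F (Q k) = (∫ θ in Ioi (exp (π - 2*π*(k:ℝ))), g2 θ)⁻¹ := red2 k
    rw [hFP, hFQ]
    exact inv_diff (g2_int_pos (exp_pos _).le)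
      (g1_le_third (exp_pos _).le) (g2_le_third (exp_pos _).le) hA
  obtain ⟨k, hk1, hk2⟩ := ((eventually_ge_atTop 1).and hev).exists
  linarith [hkey k hk1]
end
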